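/- Fix a linear subspace L of the space of symmetric n×n real matrices with orthogonal complement L^⊥ relative to the trace inner product ⟨A,B⟩ = tr(A·B), symmetric matrices X₀, S₀, and μ > 0. Let W and Ŵ be symmetric positive definite with Ŵ ∈ (1/√μ)·X₀ + L and Ŵ⁻¹ ∈ (1/√μ)·S₀ + L^⊥, and let D be symmetric with W^(1/2)·(I + D)·W^(1/2) ∈ (1/√μ)·X₀ + L and W^(-1/2)·(I − D)·W^(-1/2) ∈ (1/√μ)·S₀ + L^⊥. Define f : ℝ → ℝ by f(t) = tr(exp(t·D)·W^(1/2)·Ŵ⁻¹·W^(1/2)) + tr(exp(−t·D)·W^(-1/2)·Ŵ·W^(-1/2)) − 2n. If ‖D‖_∞² ≤ 2, then f(1) ≤ (1/2)·‖D‖_∞²·f(0). -/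

import Mathlib

open Matrix

section
open scoped ComplexOrder

/-- The positive semidefinite square root of a positive semidefinite matrix (the definition
`Matrix.PosSemidef.sqrt` of the older Mathlib, removed since). -/
noncomputable def Matrix.PosSemidef.sqrt {n : Type*} [Fintype n] [DecidableEq n] {𝕜 : Type*}
    [RCLike 𝕜] {A : Matrix n n 𝕜} (hA : A.PosSemidef) : Matrix n n 𝕜 :=
  hA.isHermitian.eigenvectorUnitary.1 * diagonal ((↑) ∘ (√·) ∘ hA.isHermitian.eigenvalues) *
  (star hA.isHermitian.eigenvectorUnitary : Matrix n n 𝕜)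

end

/-- The spectral norm of a real symmetric matrix: the maximum absolute value
of its eigenvalues. -/
noncomputable def specNormInf {n : ℕ} {D : Matrix (Fin n) (Fin n) ℝ}
    (hD : D.IsHermitian) : ℝ :=
  ⨆ i, |hD.eigenvalues i|

/-!
Write `R = W^{1/2}` and `P = R Ŵ⁻¹ R`, so that `f t + 2n = tr (exp (tD) P) + tr (exp (-tD) P⁻¹)`.
In an orthonormal eigenbasis of `D` (eigenvalues `λᵢ`) let `aᵢ`, `bᵢ` be the diagonal entries of
`P` and `P⁻¹`; then `aᵢ bᵢ ≥ 1` and `f t = ∑ᵢ (aᵢ e^{tλᵢ} + bᵢ e^{-tλᵢ} - 2)`. The matrices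
`R (I + D) R - Ŵ ∈ L` and `R⁻¹ (I - D) R⁻¹ - Ŵ⁻¹ ∈ L^⊥` are orthogonal, which in these coordinates
reads `∑ᵢ (aᵢ + bᵢ + λᵢ (aᵢ - bᵢ) + λᵢ² - 2) = 0`. With `eˣ - 1 - x ≤ x² (2 + eˣ) / 6`,
`λᵢ² ≤ ‖D‖²` and `aᵢ e^{λᵢ} + bᵢ e^{-λᵢ} ≥ 2`, this gives `f 1 ≤ ‖D‖² (2 f 0 + f 1) / 6`, and
`‖D‖² ≤ 2` finishes the proof.
-/

namespace Real

theorem exp_sub_one_sub_le (x : ℝ) : exp x - 1 - x ≤ x ^ 2 * (2 + exp x) / 6 := by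
  -- `G` is the difference of primitives of `(1 - t) x² ((1 - t) + t eˣ)` and `(1 - t) x² e^{tx}`
  -- (the integrand of Taylor's remainder), so it increases because `exp` lies below its chords.
  let G : ℝ → ℝ := fun t ↦
    x ^ 2 * (exp x * (t ^ 2 / 2 - t ^ 3 / 3) - (1 - t) ^ 3 / 3) - (1 + x * (1 - t)) * exp (t * x)
  have hG (t : ℝ) : HasDerivAt G ((1 - t) * x ^ 2 * ((1 - t) + t * exp x - exp (t * x))) t := by
    have h₁ : HasDerivAt (fun t : ℝ ↦ 1 - t) (-1) t := by simpa using (hasDerivAt_id t).const_sub 1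
    have h₂ : HasDerivAt (fun t : ℝ ↦ t * x) x t := by simpa using (hasDerivAt_id t).mul_const x
    refine ((((((hasDerivAt_pow 2 t).div_const 2).sub ((hasDerivAt_pow 3 t).div_const 3)).const_mul
      (exp x)).sub ((h₁.pow 3).div_const 3)).const_mul (x ^ 2) |>.sub
      ((h₁.const_mul x |>.const_add 1).mul h₂.exp)).congr_deriv ?_
    norm_num
    ring
  have hmono : MonotoneOn G (Set.Icc 0 1) := by
    refine monotoneOn_of_hasDerivWithinAt_nonneg (convex_Icc 0 1)
      (fun t _ ↦ (hG t).continuousAt.continuousWithinAt) (fun t _ ↦ (hG t).hasDerivWithinAt)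
      fun t ht ↦ ?_
    rw [interior_Icc] at ht
    have hchord : exp (t * x) ≤ (1 - t) + t * exp x := by
      simpa using convexOn_exp.2 (Set.mem_univ 0) (Set.mem_univ x) (by linarith [ht.2]) ht.1.le
        (by ring)
    have := mul_nonneg (mul_nonneg (sub_nonneg.2 ht.2.le) (sq_nonneg x)) (sub_nonneg.2 hchord)
    linarith
  have := hmono (Set.left_mem_Icc.2 zero_le_one) (Set.right_mem_Icc.2 zero_le_one) zero_le_one
  simp only [G] at this
  norm_num at this
  linarith

end Real

section ExpBounds

open Real

lemma two_le_add_of_one_le_mul {x y : ℝ} (hx : 0 < x) (hy : 0 < y) (hxy : 1 ≤ x * y) :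
    2 ≤ x + y := by
  nlinarith [sq_nonneg (x - y)]

lemma two_le_mul_exp_add_mul_exp_neg {a b : ℝ} (ha : 0 < a) (hb : 0 < b) (hab : 1 ≤ a * b)
    (l : ℝ) : 2 ≤ a * exp l + b * exp (-l) := by
  refine two_le_add_of_one_le_mul (by positivity) (by positivity) ?_
  rwa [mul_mul_mul_comm, ← exp_add, add_neg_cancel, exp_zero, mul_one]

lemma mul_exp_add_mul_exp_neg_sub_two_le {a b l δ : ℝ} (ha : 0 < a) (hb : 0 < b)
    (hab : 1 ≤ a * b) (hl : l ^ 2 ≤ δ) :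
    a * exp l + b * exp (-l) - 2 ≤
      (a + b + l * (a - b) + l ^ 2 - 2) +
        δ * (2 * (a + b - 2) + (a * exp l + b * exp (-l) - 2)) / 6 := by
  have h₀ : 2 ≤ a + b := two_le_add_of_one_le_mul ha hb hab
  have h₁ : 2 ≤ a * exp l + b * exp (-l) := two_le_mul_exp_add_mul_exp_neg ha hb hab l
  have hp := mul_le_mul_of_nonneg_left (exp_sub_one_sub_le l) ha.le
  have hm := mul_le_mul_of_nonneg_left (exp_sub_one_sub_le (-l)) hb.le
  -- `l² p ≤ δ (p - 2) + 2 l²` for `p ≥ 2`, applied to `p = a + b` and `p = a eˡ + b e⁻ˡ`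
  nlinarith [mul_le_mul_of_nonneg_left hl (sub_nonneg.2 h₀),
    mul_le_mul_of_nonneg_left hl (sub_nonneg.2 h₁)]

theorem sum_mul_exp_add_mul_exp_neg_sub_two_le {ι : Type*} [Fintype ι] {l a b : ι → ℝ} {δ : ℝ}
    (ha : ∀ i, 0 < a i) (hb : ∀ i, 0 < b i) (hab : ∀ i, 1 ≤ a i * b i) (hl : ∀ i, l i ^ 2 ≤ δ)
    (hδ : δ ≤ 2) (hsum : ∑ i, (a i + b i + l i * (a i - b i) + l i ^ 2 - 2) = 0) :
    ∑ i, (a i * exp (l i) + b i * exp (-l i) - 2) ≤ δ / 2 * ∑ i, (a i + b i - 2) := by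
  set F₀ := ∑ i, (a i + b i - 2)
  set F₁ := ∑ i, (a i * exp (l i) + b i * exp (-l i) - 2)
  have hF₁ : 0 ≤ F₁ := Finset.sum_nonneg fun i _ ↦ by
    linarith [two_le_mul_exp_add_mul_exp_neg (ha i) (hb i) (hab i) (l i)]
  have key : F₁ ≤ δ * (2 * F₀ + F₁) / 6 := calc
    F₁ ≤ ∑ i, ((a i + b i + l i * (a i - b i) + l i ^ 2 - 2) +
          δ * (2 * (a i + b i - 2) + (a i * exp (l i) + b i * exp (-l i) - 2)) / 6) :=
      Finset.sum_le_sum fun i _ ↦ mul_exp_add_mul_exp_neg_sub_two_le (ha i) (hb i) (hab i) (hl i)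
    _ = δ * (2 * F₀ + F₁) / 6 := by
      rw [Finset.sum_add_distrib, hsum, ← Finset.sum_div, ← Finset.mul_sum, Finset.sum_add_distrib,
        ← Finset.mul_sum, zero_add]
  nlinarith

end ExpBounds

namespace Matrix

open scoped MatrixOrder ComplexOrder

variable {m 𝕜 K : Type*} [Fintype m] [DecidableEq m] [RCLike 𝕜] [CommRing K]

theorem PosSemidef.sqrt_eq_cfcSqrt {A : Matrix m m 𝕜} (hA : A.PosSemidef) :
    hA.sqrt = CFC.sqrt A := by
  rw [CFC.sqrt_eq_real_sqrt A hA.nonneg, cfcₙ_eq_cfc, hA.isHermitian.cfc_eq]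
  rfl

theorem PosSemidef.isHermitian_sqrt {A : Matrix m m 𝕜} (hA : A.PosSemidef) :
    hA.sqrt.IsHermitian := by
  rw [PosSemidef.sqrt_eq_cfcSqrt]
  exact (CFC.sqrt_nonneg A).isSelfAdjoint

theorem PosDef.isUnit_sqrt {A : Matrix m m 𝕜} (hA : A.PosDef) : IsUnit hA.posSemidef.sqrt := by
  rw [PosSemidef.sqrt_eq_cfcSqrt, CFC.isUnit_sqrt_iff A hA.posSemidef.nonneg]
  exact hA.isUnit

theorem IsHermitian.trace_cfc_mul {D : Matrix m m 𝕜} (hD : D.IsHermitian) (g : ℝ → ℝ)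
    (M : Matrix m m 𝕜) :
    (cfc g D * M).trace = ∑ i, (g (hD.eigenvalues i) : 𝕜) *
      (star (hD.eigenvectorUnitary : Matrix m m 𝕜) * M * hD.eigenvectorUnitary) i i := by
  rw [hD.cfc_eq, IsHermitian.cfc, Unitary.conjStarAlgAut_apply, mul_assoc, mul_assoc,
    trace_mul_comm, mul_assoc, trace]
  simp [diagonal_mul]

theorem IsHermitian.exp_smul_eq_cfc {D : Matrix m m ℝ} (hD : D.IsHermitian) (s : ℝ) :
    NormedSpace.exp (s • D) = cfc (fun x ↦ Real.exp (s * x)) D := by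
  set U : Matrix m m ℝ := ↑hD.eigenvectorUnitary
  have hU : U * star U = 1 := Unitary.mul_star_self_of_mem hD.eigenvectorUnitary.2
  conv_lhs => rw [hD.spectral_theorem, Unitary.conjStarAlgAut_apply]
  rw [hD.cfc_eq, IsHermitian.cfc, Unitary.conjStarAlgAut_apply, ← smul_mul_assoc,
    ← mul_smul_comm, ← diagonal_smul, ← inv_eq_right_inv hU, exp_conj _ _ (.of_mul_eq_one _ hU),
    exp_diagonal]
  congr 3
  ext i
  simp [Pi.coe_exp, Real.exp_eq_exp_ℝ]

theorem PosDef.one_le_diag_mul_inv_diag {S : Matrix m m ℝ} (hS : S.PosDef) (i : m) :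
    1 ≤ S i i * S⁻¹ i i := by
  have hSS : S * S⁻¹ = 1 := mul_nonsing_inv S ((isUnit_iff_isUnit_det S).1 hS.isUnit)
  have hSt : Sᵀ = S := by simpa using hS.isHermitian.eq
  -- the quadratic form of `S` at `S⁻¹ eᵢ - c eᵢ`, minimized at `c = 1 / S i i`
  have hq (c : ℝ) : 0 ≤ S⁻¹ i i - 2 * c + c ^ 2 * S i i := by
    have := hS.posSemidef.dotProduct_mulVec_nonneg (S⁻¹ *ᵥ Pi.single i 1 - c • Pi.single i 1)
    rw [mulVec_sub, mulVec_mulVec, hSS, one_mulVec, mulVec_smul] at this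
    have h₁ : S⁻¹.col i ⬝ᵥ S.col i = 1 := by
      have : S.col i = S.row i := funext fun j ↦ congr_fun (congr_fun hSt i) j
      rw [this, dotProduct_comm]
      simpa [mul_apply, dotProduct] using congr_fun (congr_fun hSS i) i
    simp [dotProduct_sub, sub_dotProduct, h₁] at this
    linarith
  have := hq (S i i)⁻¹
  have hSi : 0 < S i i := hS.diag_pos
  field_simp at this
  nlinarith

theorem trace_conj_mul_conj_inv {R : Matrix m m K} (hR : IsUnit R) (A B : Matrix m m K) :
    (R * A * R * (R⁻¹ * B * R⁻¹)).trace = (A * B).trace := by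
  have hR' : IsUnit R.det := (isUnit_iff_isUnit_det R).1 hR
  simp only [mul_assoc, mul_nonsing_inv_cancel_left _ _ hR']
  rw [trace_mul_comm]
  simp only [mul_assoc, nonsing_inv_mul R hR', mul_one]

theorem trace_conj_sub_mul_conj_inv_sub {R W : Matrix m m K} (hR : IsUnit R) (hW : IsUnit W)
    (A B : Matrix m m K) :
    ((R * A * R - W) * (R⁻¹ * B * R⁻¹ - W⁻¹)).trace =
      ((A - (R * W⁻¹ * R)⁻¹) * (B - R * W⁻¹ * R)).trace := by
  have hR' : IsUnit R.det := (isUnit_iff_isUnit_det R).1 hR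
  have h₁ : R * A * R - W = R * (A - (R * W⁻¹ * R)⁻¹) * R := by
    rw [mul_inv_rev, mul_inv_rev, nonsing_inv_nonsing_inv W ((isUnit_iff_isUnit_det W).1 hW)]
    simp only [mul_sub, sub_mul, mul_assoc, mul_nonsing_inv_cancel_left _ _ hR',
      nonsing_inv_mul R hR', mul_one]
  have h₂ : R⁻¹ * B * R⁻¹ - W⁻¹ = R⁻¹ * (B - R * W⁻¹ * R) * R⁻¹ := by
    simp only [mul_sub, sub_mul, mul_assoc, nonsing_inv_mul_cancel_left _ _ hR',
      mul_nonsing_inv R hR', mul_one]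
  rw [h₁, h₂, trace_conj_mul_conj_inv hR]

theorem trace_one_add_sub_inv_mul_one_sub_sub {P : Matrix m m K} (hP : IsUnit P)
    (D : Matrix m m K) :
    ((1 + D - P⁻¹) * (1 - D - P)).trace =
      2 * Fintype.card m - (D * D).trace -
        (P.trace + P⁻¹.trace + (D * P).trace - (D * P⁻¹).trace) := by
  have hPP : P⁻¹ * P = 1 := nonsing_inv_mul P ((isUnit_iff_isUnit_det P).1 hP)
  have : (1 + D - P⁻¹) * (1 - D - P) = 1 + P⁻¹ * P - D * D - P - D * P - P⁻¹ + P⁻¹ * D := by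
    noncomm_ring
  rw [this, hPP, trace_add, trace_sub, trace_sub, trace_sub, trace_sub, trace_add, trace_one,
    trace_mul_comm P⁻¹ D]
  ring

theorem IsHermitian.trace_exp_mul_add_trace_exp_neg_mul_inv_le {D P : Matrix m m ℝ}
    (hD : D.IsHermitian) (hP : P.PosDef) {δ : ℝ} (hl : ∀ i, hD.eigenvalues i ^ 2 ≤ δ)
    (hδ : δ ≤ 2) (horth : P.trace + P⁻¹.trace + (D * P).trace - (D * P⁻¹).trace =
      2 * Fintype.card m - (D * D).trace) :
    (NormedSpace.exp D * P).trace + (NormedSpace.exp (-D) * P⁻¹).trace - 2 * Fintype.card m ≤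
      δ / 2 * (P.trace + P⁻¹.trace - 2 * Fintype.card m) := by
  set U : Matrix m m ℝ := ↑hD.eigenvectorUnitary
  have hU : U * star U = 1 := Unitary.mul_star_self_of_mem hD.eigenvectorUnitary.2
  have hU' : star U * U = 1 := Unitary.star_mul_self_of_mem hD.eigenvectorUnitary.2
  set S := star U * P * U with hSdef
  have hS : S.PosDef := (IsUnit.of_mul_eq_one _ hU).posDef_star_left_conjugate_iff.2 hP
  have hSinv : S⁻¹ = star U * P⁻¹ * U := by
    rw [mul_inv_rev, mul_inv_rev, inv_eq_left_inv hU', inv_eq_left_inv hU, mul_assoc]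
  have htr (g : ℝ → ℝ) (M : Matrix m m ℝ) :
      (cfc g D * M).trace = ∑ i, g (hD.eigenvalues i) * (star U * M * U) i i := by
    simpa using hD.trace_cfc_mul g M
  have hexp (s : ℝ) (M : Matrix m m ℝ) : (NormedSpace.exp (s • D) * M).trace =
      ∑ i, Real.exp (s * hD.eigenvalues i) * (star U * M * U) i i := by
    rw [hD.exp_smul_eq_cfc, htr]
  have hone (M : Matrix m m ℝ) : M.trace = ∑ i, (star U * M * U) i i := by
    simpa [cfc_const_one ℝ D] using htr (fun _ ↦ 1) M
  have hlin (M : Matrix m m ℝ) : (D * M).trace = ∑ i, hD.eigenvalues i * (star U * M * U) i i := by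
    simpa [cfc_id ℝ D hD.isSelfAdjoint] using htr id M
  have hsq : (D * D).trace = ∑ i, hD.eigenvalues i ^ 2 := by
    have := htr (· ^ 2) 1
    rw [cfc_pow_id D 2 hD.isSelfAdjoint, mul_one, sq] at this
    simpa [hU'] using this
  have := sum_mul_exp_add_mul_exp_neg_sub_two_le (fun i ↦ hS.diag_pos) (fun i ↦ hS.inv.diag_pos)
    hS.one_le_diag_mul_inv_diag hl hδ (l := hD.eigenvalues) ?_
  · rw [← one_smul ℝ D, hexp, ← neg_smul, hexp, hone P, hone P⁻¹, ← hSinv, ← hSdef]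
    simp only [Finset.sum_sub_distrib, Finset.sum_add_distrib, Finset.sum_const, Finset.card_univ,
      nsmul_eq_mul, one_mul, neg_one_mul, mul_comm (Real.exp _)] at this ⊢
    linarith
  · rw [hone P, hone P⁻¹, hlin, hlin, hsq, ← hSinv, ← hSdef] at horth
    simp only [Finset.sum_sub_distrib, Finset.sum_add_distrib, Finset.sum_const, Finset.card_univ,
      nsmul_eq_mul, mul_sub]
    linarith

end Matrix

theorem eigenvalues_sq_le_specNormInf_sq {n : ℕ} {D : Matrix (Fin n) (Fin n) ℝ}
    (hD : D.IsHermitian) (i : Fin n) : hD.eigenvalues i ^ 2 ≤ specNormInf hD ^ 2 := by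
  rw [← sq_abs]
  exact pow_le_pow_left₀ (abs_nonneg _)
    (le_ciSup (f := fun j ↦ |hD.eigenvalues j|) (Set.finite_range _).bddAbove i) 2

theorem full_newton_step_decrease_general
    (n : ℕ)
    (L : Submodule ℝ (Matrix (Fin n) (Fin n) ℝ))
    (Lp : Submodule ℝ (Matrix (Fin n) (Fin n) ℝ))
    (hLp : ∀ B, B ∈ Lp ↔ (B.IsHermitian ∧ ∀ A ∈ L, (A * B).trace = 0))
    (X₀ S₀ : Matrix (Fin n) (Fin n) ℝ)
    (μ : ℝ)
    (W Wc : Matrix (Fin n) (Fin n) ℝ) (hW : W.PosDef) (hWc : Wc.PosDef)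
    (hWc1 : Wc - (1 / Real.sqrt μ) • X₀ ∈ L)
    (hWc2 : Wc⁻¹ - (1 / Real.sqrt μ) • S₀ ∈ Lp)
    (D : Matrix (Fin n) (Fin n) ℝ) (hD : D.IsHermitian)
    (hD1 : hW.posSemidef.sqrt * (1 + D) * hW.posSemidef.sqrt
            - (1 / Real.sqrt μ) • X₀ ∈ L)
    (hD2 : (hW.posSemidef.sqrt)⁻¹ * (1 - D) * (hW.posSemidef.sqrt)⁻¹
            - (1 / Real.sqrt μ) • S₀ ∈ Lp)
    (f : ℝ → ℝ)
    (hf : ∀ t : ℝ, f t =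
      (NormedSpace.exp (t • D) * (hW.posSemidef.sqrt * Wc⁻¹ * hW.posSemidef.sqrt)).trace +
        (NormedSpace.exp ((-t) • D) *
          ((hW.posSemidef.sqrt)⁻¹ * Wc * (hW.posSemidef.sqrt)⁻¹)).trace - 2 * n)
    (hDsmall : (specNormInf hD) ^ 2 ≤ 2) :
    f 1 ≤ (1 / 2) * (specNormInf hD) ^ 2 * f 0 := by
  set R := hW.posSemidef.sqrt
  have hR : IsUnit R := hW.isUnit_sqrt
  have hP : (R * Wc⁻¹ * R).PosDef := by
    have hRH : star R = R := hW.posSemidef.isHermitian_sqrt.eq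
    simpa only [hRH] using hR.posDef_star_left_conjugate_iff.2 hWc.inv
  have hPinv : (R * Wc⁻¹ * R)⁻¹ = R⁻¹ * Wc * R⁻¹ := by
    rw [Matrix.mul_inv_rev, Matrix.mul_inv_rev,
      nonsing_inv_nonsing_inv Wc ((isUnit_iff_isUnit_det Wc).1 hWc.isUnit), mul_assoc]
  have horth := ((hLp _).1 (Lp.sub_mem hD2 hWc2)).2 _ (L.sub_mem hD1 hWc1)
  rw [sub_sub_sub_cancel_right, sub_sub_sub_cancel_right,
    trace_conj_sub_mul_conj_inv_sub hR hWc.isUnit, trace_one_add_sub_inv_mul_one_sub_sub hP.isUnit]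
    at horth
  have key := hD.trace_exp_mul_add_trace_exp_neg_mul_inv_le hP
    (eigenvalues_sq_le_specNormInf_sq hD) hDsmall (by linarith)
  rw [hf 1, hf 0, one_smul, neg_smul, one_smul, neg_zero, zero_smul, NormedSpace.exp_zero, one_mul,
    one_mul, ← hPinv]
  rw [Fintype.card_fin] at key
  linarith

/-- Full Newton step decrease: if `D` is the Newton direction at `(W, μ)`,
`Wc` the scaled centered point, `f t` the divergence between `Wc` and the
geodesic through `W` with direction `D`, and `‖D‖_∞² ≤ 2`, then
`f 1 ≤ (1/2) ‖D‖_∞² f 0`. -/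
theorem full_newton_step_decrease
    (n : ℕ) (hn : 1 ≤ n)
    (L : Submodule ℝ (Matrix (Fin n) (Fin n) ℝ))
    (hL : ∀ A ∈ L, A.IsHermitian)
    (Lp : Submodule ℝ (Matrix (Fin n) (Fin n) ℝ))
    (hLp : ∀ B, B ∈ Lp ↔ (B.IsHermitian ∧ ∀ A ∈ L, (A * B).trace = 0))
    (X₀ S₀ : Matrix (Fin n) (Fin n) ℝ) (hX₀ : X₀.IsHermitian) (hS₀ : S₀.IsHermitian)
    (μ : ℝ) (hμ : 0 < μ)
    (W Wc : Matrix (Fin n) (Fin n) ℝ) (hW : W.PosDef) (hWc : Wc.PosDef)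
    (hWc1 : Wc - (1 / Real.sqrt μ) • X₀ ∈ L)
    (hWc2 : Wc⁻¹ - (1 / Real.sqrt μ) • S₀ ∈ Lp)
    (D : Matrix (Fin n) (Fin n) ℝ) (hD : D.IsHermitian)
    (hD1 : hW.posSemidef.sqrt * (1 + D) * hW.posSemidef.sqrt
            - (1 / Real.sqrt μ) • X₀ ∈ L)
    (hD2 : (hW.posSemidef.sqrt)⁻¹ * (1 - D) * (hW.posSemidef.sqrt)⁻¹
            - (1 / Real.sqrt μ) • S₀ ∈ Lp)
    (f : ℝ → ℝ)
    (hf : ∀ t : ℝ, f t =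
      (NormedSpace.exp (t • D) * (hW.posSemidef.sqrt * Wc⁻¹ * hW.posSemidef.sqrt)).trace +
        (NormedSpace.exp ((-t) • D) *
          ((hW.posSemidef.sqrt)⁻¹ * Wc * (hW.posSemidef.sqrt)⁻¹)).trace - 2 * n)
    (hDsmall : (specNormInf hD) ^ 2 ≤ 2) :
    f 1 ≤ (1 / 2) * (specNormInf hD) ^ 2 * f 0 :=
  full_newton_step_decrease_general n L Lp hLp X₀ S₀ μ W Wc hW hWc hWc1 hWc2 D hD hD1 hD2 f hf
    hDsmall
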